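/- Let G be a locally compact group with Haar measure ν, U a symmetric relatively compact open neighborhood of the identity, and B ⊆ G compact. Then there exist a regular compact set C' with U-connected interior and ν(∂C') = 0, and finitely many elements g₁,…,gₙ ∈ G, such that B ⊆ ⋃ᵢ gᵢC' and gᵢC'·U ∩ gⱼC'·U = ∅ whenever i ≠ j. -/

import Mathlib

/-!
The subgroup `H` generated by `U` is open, so `B` meets only finitely many left cosets `gᵢ H`,
and the compact set `⋃ᵢ gᵢ⁻¹ B ∩ H` lies in some power `U ^ N`. Take an Urysohn function that is
`1` on `closure (U ^ N)` and `0` off `U ^ (N + 1)`; only countably many of its level sets have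
positive measure, and for any other level `t ∈ (0, 1)` the closure `C'` of `{t < f}` is a regular
compact set whose frontier lies in the null set `{f = t}`.

Since `U ^ N ⊆ interior C' ⊆ U ^ (N + 1)`, walking down through the powers of `U` shows that any
nonempty `A ⊆ interior C'` with `A * U ∩ interior C' = A` contains `1`; the complement of such an
`A` has the same property, so `interior C'` is `U`-connected. Finally `C' * U ⊆ H`, so the
translates by representatives of distinct cosets are disjoint.
-/

open MeasureTheory Set Pointwise

section UConnected

variable {G : Type*} [Group G]

def IsUConnected (U S : Set G) : Prop :=
  ¬ ∃ A : Set G, A ≠ ∅ ∧ A ≠ S ∧ A * U ∩ S = A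

variable {U S A : Set G} {N : ℕ}

lemma one_mem_of_mul_inter_eq (hU1 : (1 : G) ∈ U) (hUsymm : U⁻¹ = U) (hNS : U ^ N ⊆ S)
    (hSN : S ⊆ U ^ (N + 1)) (hA : A * U ∩ S = A) (hAne : A.Nonempty) : (1 : G) ∈ A := by
  suffices descend : ∀ k ≤ N + 1, ∀ x ∈ A, x ∈ U ^ k → (1 : G) ∈ A by
    obtain ⟨a, ha⟩ := hAne
    exact descend (N + 1) le_rfl a ha (hSN (hA ▸ ha).2)
  intro k
  induction k with
  | zero => rintro - x hxA rfl; exact hxA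
  | succ k ih =>
    rintro hk _ hxA ⟨y, hy, u, hu, rfl⟩
    have hyS : y ∈ S := hNS (pow_subset_pow_right hU1 (by omega) hy)
    have hyAU : y ∈ A * U :=
      ⟨y * u, hxA, u⁻¹, hUsymm ▸ inv_mem_inv.2 hu, mul_inv_cancel_right y u⟩
    exact ih (by omega) y (hA ▸ ⟨hyAU, hyS⟩) hy

lemma diff_mul_inter_eq (hU1 : (1 : G) ∈ U) (hUsymm : U⁻¹ = U) (hA : A * U ∩ S = A) :
    (S \ A) * U ∩ S = S \ A := by
  refine Subset.antisymm ?_ fun x hx => ⟨⟨x, hx, 1, hU1, mul_one x⟩, hx.1⟩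
  rintro _ ⟨⟨y, ⟨hyS, hyA⟩, u, hu, rfl⟩, hyuS⟩
  refine ⟨hyuS, fun hyuA => hyA ?_⟩
  exact hA ▸ ⟨⟨y * u, hyuA, u⁻¹, hUsymm ▸ inv_mem_inv.2 hu, mul_inv_cancel_right y u⟩, hyS⟩

lemma isUConnected_of_pow_subset (hU1 : (1 : G) ∈ U) (hUsymm : U⁻¹ = U) (hNS : U ^ N ⊆ S)
    (hSN : S ⊆ U ^ (N + 1)) : IsUConnected U S := by
  rintro ⟨A, hAne, hAS, hA⟩
  have hAsub : A ⊆ S := hA ▸ inter_subset_right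
  have h1A := one_mem_of_mul_inter_eq hU1 hUsymm hNS hSN hA (nonempty_iff_ne_empty.2 hAne)
  have h1SA := one_mem_of_mul_inter_eq hU1 hUsymm hNS hSN (diff_mul_inter_eq hU1 hUsymm hA)
    (sdiff_nonempty.2 fun hSA => hAS (hAsub.antisymm hSA))
  exact h1SA.2 h1A

end UConnected

lemma disjoint_smul_mul_of_mk_ne {G : Type*} [Group G] {H : Subgroup G} {C U : Set G}
    (hCU : C * U ⊆ H) {a b : G} (hab : (a : G ⧸ H) ≠ b) : Disjoint (a • C * U) (b • C * U) := by
  rw [smul_mul_assoc, smul_mul_assoc]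
  refine disjoint_left.2 fun x hxa hxb => hab (QuotientGroup.eq.2 ?_)
  rw [mem_leftCoset_iff] at hxa hxb
  simpa using mul_mem (hCU hxa) (inv_mem (hCU hxb))

lemma Subgroup.closure_subset_iUnion_pow {G : Type*} [Group G] {U : Set G} (hUsymm : U⁻¹ = U) :
    (Subgroup.closure U : Set G) ⊆ ⋃ n, U ^ n := by
  intro x hx
  induction hx using Subgroup.closure_induction with
  | mem x hx => exact mem_iUnion.2 ⟨1, by rwa [pow_one]⟩
  | one => exact mem_iUnion.2 ⟨0, by rw [pow_zero]; rfl⟩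
  | mul x y _ _ hx hy =>
    obtain ⟨m, hm⟩ := mem_iUnion.1 hx
    obtain ⟨k, hk⟩ := mem_iUnion.1 hy
    exact mem_iUnion.2 ⟨m + k, pow_add U m k ▸ mul_mem_mul hm hk⟩
  | inv x _ hx =>
    obtain ⟨m, hm⟩ := mem_iUnion.1 hx
    exact mem_iUnion.2 ⟨m, by rw [← hUsymm, inv_pow]; exact inv_mem_inv.2 hm⟩

section TopologicalGroup

variable {G : Type*} [Group G] [TopologicalSpace G] [IsTopologicalGroup G] {U : Set G}

lemma isCompact_closure_pow (hU : IsCompact (closure U)) (n : ℕ) :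
    IsCompact (closure (U ^ n)) := by
  have hpow : IsCompact (closure U ^ n) := by
    induction n with
    | zero => simp
    | succ n ih => rw [pow_succ]; exact ih.mul hU
  exact hpow.closure_of_subset (pow_subset_pow_left subset_closure)

lemma IsOpen.pow_succ (hU : IsOpen U) (n : ℕ) : IsOpen (U ^ (n + 1)) := by
  rw [_root_.pow_succ]; exact hU.mul_left

lemma closure_pow_subset_pow_succ (hUo : IsOpen U) (hU1 : (1 : G) ∈ U) (hUsymm : U⁻¹ = U)
    (n : ℕ) : closure (U ^ n) ⊆ U ^ (n + 1) := by
  rw [_root_.pow_succ]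
  exact closure_subset_mul_right_of_mem_nhds_one_of_inv _ (hUo.mem_nhds hU1)
    fun x hx => hUsymm ▸ inv_mem_inv.2 hx

lemma IsCompact.exists_subset_pow_of_subset_closure {K : Set G} (hK : IsCompact K)
    (hUo : IsOpen U) (hU1 : (1 : G) ∈ U) (hUsymm : U⁻¹ = U) (hKU : K ⊆ Subgroup.closure U) :
    ∃ N, K ⊆ U ^ N := by
  have hmono : Monotone fun n => U ^ (n + 1) := fun m n hmn =>
    pow_subset_pow_right hU1 (Nat.succ_le_succ hmn)
  have hcover : K ⊆ ⋃ n, U ^ (n + 1) :=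
    hKU.trans <| (Subgroup.closure_subset_iUnion_pow hUsymm).trans <| iUnion_subset fun n =>
      (pow_subset_pow_right hU1 n.le_succ).trans (subset_iUnion (fun n => U ^ (n + 1)) n)
  obtain ⟨N, hN⟩ := hK.elim_directed_cover _ hUo.pow_succ hcover hmono.directed_le
  exact ⟨N + 1, hN⟩

lemma exists_fin_cosetReps_cover {H : Subgroup G} (hH : IsOpen (H : Set G)) {B : Set G}
    (hB : IsCompact B) : ∃ (n : ℕ) (g : Fin n → G),
      Function.Injective (fun i => (g i : G ⧸ H)) ∧ ∀ b ∈ B, ∃ i, (g i)⁻¹ * b ∈ H := by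
  have : DiscreteTopology (G ⧸ H) := QuotientGroup.discreteTopology hH
  have hfin := (hB.image (QuotientGroup.continuous_mk (N := H))).finite_of_discrete
  let e := hfin.toFinset.equivFin
  have hmk (i) : ((e.symm i : G ⧸ H).out : G ⧸ H) = e.symm i := QuotientGroup.out_eq' _
  refine ⟨_, fun i => (e.symm i : G ⧸ H).out, fun i j hij => ?_, fun b hb => ?_⟩
  · simpa [hmk] using hij
  · have hbT : (b : G ⧸ H) ∈ hfin.toFinset := hfin.mem_toFinset.2 (mem_image_of_mem _ hb)
    refine ⟨e ⟨_, hbT⟩, QuotientGroup.eq.1 ?_⟩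
    simp

end TopologicalGroup

lemma exists_measure_levelSet_eq_zero {X : Type*} [MeasurableSpace X] (μ : Measure X)
    [SFinite μ] {f : X → ℝ} (hf : Measurable f) {a b : ℝ} (hab : a < b) :
    ∃ t ∈ Ioo a b, μ {x | f x = t} = 0 := by
  have hcount := Measure.countable_meas_level_set_pos (μ := μ) hf
  obtain ⟨t, ht, hnull⟩ := sdiff_nonempty.2 fun h =>
    (Cardinal.Real.Ioo_countable_iff.1 (hcount.mono h)).not_gt hab
  exact ⟨t, ht, nonpos_iff_eq_zero.1 (not_lt.1 hnull)⟩

lemma closure_interior_closure_of_isOpen {X : Type*} [TopologicalSpace X] {s : Set X}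
    (hs : IsOpen s) : closure (interior (closure s)) = closure s :=
  isClosed_closure.closure_interior_subset.antisymm (closure_mono hs.subset_interior_closure)

lemma exists_regular_compact_null_frontier_between {X : Type*} [TopologicalSpace X]
    [RegularSpace X] [LocallyCompactSpace X] [MeasurableSpace X] [OpensMeasurableSpace X]
    (μ : Measure X) [IsFiniteMeasureOnCompacts μ] {K W : Set X} (hK : IsCompact K)
    (hW : IsOpen W) (hKW : K ⊆ W) :
    ∃ C, IsCompact C ∧ C = closure (interior C) ∧ μ (frontier C) = 0 ∧
      K ⊆ interior C ∧ C ⊆ W := by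
  obtain ⟨f, hfK, hfW, hfc, -⟩ := exists_continuous_one_zero_of_isCompact hK hW.isClosed_compl
    (disjoint_compl_right_iff_subset.2 hKW)
  have : IsFiniteMeasure (μ.restrict (tsupport f)) :=
    isFiniteMeasure_restrict.2 hfc.isCompact.measure_ne_top
  obtain ⟨t, ⟨ht0, ht1⟩, hnull⟩ :=
    exists_measure_levelSet_eq_zero (μ.restrict (tsupport f)) f.continuous.measurable one_pos
  have hsupp : {x | t < f x} ⊆ tsupport f := fun x hx =>
    subset_tsupport f (ht0.trans hx).ne'
  have hopen : IsOpen {x | t < f x} := isOpen_lt continuous_const f.continuous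
  refine ⟨closure {x | t < f x}, hfc.isCompact.of_isClosed_subset isClosed_closure
    (closure_minimal hsupp (isClosed_tsupport f)),
    (closure_interior_closure_of_isOpen hopen).symm, ?_, ?_, ?_⟩
  · refine measure_mono_null (frontier_closure_subset.trans
      (frontier_lt_subset_eq continuous_const f.continuous)) ?_
    have hlevel : {x | f x = t} ⊆ tsupport f := fun x hx =>
      subset_tsupport f (show f x ≠ 0 from hx ▸ ht0.ne')
    rw [Measure.restrict_eq_self μ hlevel] at hnull
    simpa [eq_comm] using hnull
  · exact fun x hx => hopen.subset_interior_closure (show t < f x by rw [hfK hx]; exact ht1)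
  · refine fun x hx => by_contra fun hxW => ?_
    have hle : t ≤ f x := closure_lt_subset_le continuous_const f.continuous hx
    exact (hle.trans_eq (hfW hxW)).not_gt ht0

theorem stmt_15 {G : Type*} [Group G] [TopologicalSpace G] [IsTopologicalGroup G]
    [LocallyCompactSpace G] [MeasurableSpace G] [BorelSpace G]
    (ν : Measure G) [ν.IsHaarMeasure]
    (U : Set G) (hUopen : IsOpen U) (hUone : (1 : G) ∈ U) (hUsymm : U⁻¹ = U)
    (hUrc : IsCompact (closure U))
    (B : Set G) (hB : IsCompact B) :
    ∃ C' : Set G, IsCompact C' ∧ C' = closure (interior C') ∧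
      (¬ ∃ A : Set G, A ≠ ∅ ∧ A ≠ interior C' ∧ A * U ∩ interior C' = A) ∧
      ν (frontier C') = 0 ∧
      ∃ (n : ℕ) (g : Fin n → G),
        B ⊆ ⋃ i, g i • C' ∧
        ∀ i j, i ≠ j → (g i • C') * U ∩ ((g j • C') * U) = ∅ := by
  set H := Subgroup.closure U
  have hHopen : IsOpen (H : Set G) :=
    H.isOpen_of_mem_nhds (Filter.mem_of_superset (hUopen.mem_nhds hUone) Subgroup.subset_closure)
  obtain ⟨n, g, hg, hgB⟩ := exists_fin_cosetReps_cover hHopen hB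
  obtain ⟨N, hKN⟩ : ∃ N, (⋃ i, ((g i)⁻¹ • B ∩ H)) ⊆ U ^ N :=
    (isCompact_iUnion fun i => (hB.smul _).inter_right (H.isClosed_of_isOpen hHopen))
      |>.exists_subset_pow_of_subset_closure hUopen hUone hUsymm
        (iUnion_subset fun _ => inter_subset_right)
  obtain ⟨C, hCc, hCreg, hCnull, hNC, hCN⟩ := exists_regular_compact_null_frontier_between ν
    (isCompact_closure_pow hUrc N) (hUopen.pow_succ N)
    (closure_pow_subset_pow_succ hUopen hUone hUsymm N)
  have hCU : C * U ⊆ H :=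
    Subgroup.mul_subset (hCN.trans (Subgroup.pow_subset Subgroup.subset_closure))
      Subgroup.subset_closure
  refine ⟨C, hCc, hCreg, isUConnected_of_pow_subset hUone hUsymm (subset_closure.trans hNC)
    (interior_subset.trans hCN), hCnull, n, g, fun b hb => ?_, fun i j hij =>
      disjoint_iff_inter_eq_empty.1 (disjoint_smul_mul_of_mk_ne hCU (hg.ne hij))⟩
  obtain ⟨i, hi⟩ := hgB b hb
  have hbK : (g i)⁻¹ * b ∈ ⋃ i, ((g i)⁻¹ • B ∩ H) := mem_iUnion.2 ⟨i, ⟨b, hb, rfl⟩, hi⟩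
  exact mem_iUnion.2
    ⟨i, (mem_leftCoset_iff _).2 <| interior_subset <| hNC <| subset_closure <| hKN hbK⟩
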